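/- arXiv:2209.04567 — 2 statements merged into one kernel-verified Lean document; each statement's English description precedes it below -/
import Mathlib

section
/- If a deterministic filter F is globally language comparable (GLC), then its compatibility graph G_F is chordal. -/
/-- A clique cover of a simple graph: a finite family of cliques covering every vertex. -/
def SimpleGraph.IsCliqueCover {V : Type} (G : SimpleGraph V) (K : Finset (Finset V)) : Prop :=
  (∀ s ∈ K, G.IsClique (s : Set V)) ∧ ∀ v : V, ∃ s ∈ K, v ∈ s

/-- The clique cover number: minimum number of cliques in a clique cover. -/
noncomputable def SimpleGraph.cliqueCoverNum {V : Type} (G : SimpleGraph V) : ℕ :=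
  sInf {n | ∃ K : Finset (Finset V), G.IsCliqueCover K ∧ K.card = n}

/-- The closed neighborhood of a vertex. -/
def SimpleGraph.closedNbhd {V : Type} (G : SimpleGraph V) (v : V) : Set V :=
  {w | w = v ∨ G.Adj v w}

/-- A graph is chordal if every cycle of length at least four has a chord:
an edge of the graph joining two vertices of the cycle that is not an edge of the cycle. -/
def SimpleGraph.Chordal {V : Type} (G : SimpleGraph V) : Prop :=
  ∀ (v : V) (c : G.Walk v v), c.IsCycle → 4 ≤ c.length →
    ∃ x y : V, G.Adj x y ∧ x ∈ c.support ∧ y ∈ c.support ∧ s(x, y) ∉ c.edges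

/-- A deterministic (combinatorial) filter: states `S`, observations `Y`, outputs `C`,
an initial state, a partial transition function and an output function. -/
structure DFilter (S Y C : Type) where
  init : S
  tr : S → Y → Option S
  out : S → C

namespace DFilter

variable {S Y C : Type}

/-- Trace an observation sequence from a state (`none` if it crashes). -/
def run (F : DFilter S Y C) : S → List Y → Option S
  | v, [] => some v
  | v, y :: ys => (F.tr v y).bind fun w => F.run w ys

/-- The extensions of a state: observation sequences traceable from it. -/
def Ext (F : DFilter S Y C) (v : S) : Set (List Y) :=
  {s | (F.run v s).isSome}

/-- The output sequence produced by tracing an observation sequence from a state,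
reading the output at every visited state (starting with the output of the state itself). -/
def outs (F : DFilter S Y C) : S → List Y → Option (List C)
  | v, [] => some [F.out v]
  | v, y :: ys => (F.tr v y).bind fun w => (F.outs w ys).map (F.out v :: ·)

/-- Two states are compatible when the outputs they produce agree on all common extensions. -/
def Compatible (F : DFilter S Y C) (v w : S) : Prop :=
  ∀ s : List Y, s ∈ F.Ext v → s ∈ F.Ext w → F.outs v s = F.outs w s

/-- The compatibility graph: edges join distinct compatible states. -/
def compatGraph (F : DFilter S Y C) : SimpleGraph S where
  Adj v w := v ≠ w ∧ F.Compatible v w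
  symm := ⟨by
    rintro v w ⟨hne, hc⟩
    exact ⟨hne.symm, fun s hw hv => (hc s hv hw).symm⟩⟩
  loopless := ⟨fun v h => h.1 rfl⟩

/-- A filter is globally language comparable (GLC) when the extension sets of any two
compatible states are comparable under inclusion. -/
def GLC (F : DFilter S Y C) : Prop :=
  ∀ v w : S, F.Compatible v w → F.Ext v ⊆ F.Ext w ∨ F.Ext w ⊆ F.Ext v

/-- A filter is neighborhood comparable (NC) when any two vertices of its compatibility
graph with intersecting closed neighborhoods have comparable closed neighborhoods. -/
def NC (F : DFilter S Y C) : Prop :=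
  ∀ v w : S, (F.compatGraph.closedNbhd v ∩ F.compatGraph.closedNbhd w).Nonempty →
    F.compatGraph.closedNbhd v ⊆ F.compatGraph.closedNbhd w ∨
      F.compatGraph.closedNbhd w ⊆ F.compatGraph.closedNbhd v

/-- The target set of the determinism-enforcing zipper constraint generated by a
set of states `U` and an observation `y`: all `y`-children of members of `U`. -/
def zipTarget (F : DFilter S Y C) (U : Set S) (y : Y) : Set S :=
  {w | ∃ u ∈ U, F.tr u y = some w}

/-- A set of mutually compatible states. -/
def MutuallyCompatible (F : DFilter S Y C) (U : Set S) : Prop :=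
  ∀ u ∈ U, ∀ u' ∈ U, F.Compatible u u'

end DFilter

/-!
Among the vertices of a cycle of length at least four, pick one, `m`, whose extension set is
maximal. Its cycle neighbours `a` and `b` are compatible with `m`, so by global language
comparability and maximality the extension set of `a` lies inside that of `m`. Every common
extension of `a` and `b` is then an extension of `m`, on which both agree with `m`; hence `a` and
`b` are compatible, and being distinct and non-consecutive on the cycle, they span a chord.
-/

namespace SimpleGraph.Walk

variable {V : Type*} {G : SimpleGraph V} {u : V}

theorem IsCycle.snd_penultimate_notMem_edges {p : G.Walk u u} (hp : p.IsCycle)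
    (hlen : 4 ≤ p.length) : s(p.snd, p.penultimate) ∉ p.edges := by
  intro hmem
  have hedges : p.edges = s(u, p.snd) :: p.tail.edges := by
    rw [← edges_cons (p.adj_snd hp.not_nil), p.cons_tail_eq hp.not_nil]
  rw [hedges, List.mem_cons] at hmem
  rcases hmem with hfirst | htail
  · rw [Sym2.eq_iff] at hfirst
    rcases hfirst with ⟨hsnd, -⟩ | ⟨-, hpen⟩
    · exact (p.adj_snd hp.not_nil).ne hsnd.symm
    · exact (p.adj_penultimate hp.not_nil).ne hpen
  · have h2 : p.penultimate = p.getVert 2 := by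
      rw [hp.isPath_tail.eq_snd_of_mem_edges htail, snd, getVert_tail]
    have := hp.getVert_injOn (by simp; lia) (by simp; lia) h2
    lia

theorem IsCycle.exists_chord_of_adj_rotate [DecidableEq V] {v : V} {c : G.Walk v v}
    (hc : c.IsCycle) (hlen : 4 ≤ c.length) (hu : u ∈ c.support)
    (hadj : G.Adj (c.rotate u hu).snd (c.rotate u hu).penultimate) :
    ∃ x y, G.Adj x y ∧ x ∈ c.support ∧ y ∈ c.support ∧ s(x, y) ∉ c.edges := by
  set c' := c.rotate u hu
  have hc' : c'.IsCycle := hc.rotate hu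
  refine ⟨c'.snd, c'.penultimate, hadj, ?_, ?_, ?_⟩
  · exact (mem_support_rotate_iff c u hu).mp (c'.getVert_mem_support 1)
  · exact (mem_support_rotate_iff c u hu).mp (c'.getVert_mem_support _)
  · rw [← (rotate_edges c u hu).perm.mem_iff]
    exact hc'.snd_penultimate_notMem_edges (by rwa [length_rotate])

end SimpleGraph.Walk

namespace DFilter

variable {S Y C : Type} {F : DFilter S Y C} {a b m : S}

theorem Compatible.symm (h : F.Compatible a b) : F.Compatible b a :=
  fun s hb ha => (h s ha hb).symm

theorem Compatible.trans_of_ext_inter_subset (ham : F.Compatible a m) (hmb : F.Compatible m b)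
    (hext : F.Ext a ∩ F.Ext b ⊆ F.Ext m) : F.Compatible a b :=
  fun s ha hb => (ham s ha (hext ⟨ha, hb⟩)).trans (hmb s (hext ⟨ha, hb⟩) hb)

theorem GLC.ext_subset_of_maximalFor {P : S → Prop} (hglc : F.GLC) (hm : MaximalFor P F.Ext m)
    (ha : P a) (hcompat : F.Compatible m a) : F.Ext a ⊆ F.Ext m :=
  (hglc m a hcompat).elim (hm.2 ha) id

end DFilter

/-- The compatibility graph of a globally language comparable filter is chordal. -/
theorem compatGraph_chordal_of_glc {S Y C : Type} (F : DFilter S Y C) (hglc : F.GLC) :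
    F.compatGraph.Chordal := by
  classical
  intro v c hc hlen
  obtain ⟨m, hm⟩ := Set.Finite.exists_maximalFor F.Ext {w | w ∈ c.support}
    c.support.finite_toSet ⟨v, c.start_mem_support⟩
  set c' := c.rotate m hm.1
  have hc' : c'.IsCycle := hc.rotate hm.1
  have hsnd_mem : c'.snd ∈ c.support :=
    (c.mem_support_rotate_iff m hm.1).mp (c'.getVert_mem_support 1)
  have hsnd : F.Compatible m c'.snd := (c'.adj_snd hc'.not_nil).2
  have hpen : F.Compatible m c'.penultimate := (c'.adj_penultimate hc'.not_nil).symm.2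
  refine hc.exists_chord_of_adj_rotate hlen hm.1 ⟨hc'.snd_ne_penultimate, ?_⟩
  exact hsnd.symm.trans_of_ext_inter_subset hpen fun s hs =>
    hglc.ext_subset_of_maximalFor hm hsnd_mem hsnd hs.1
end

section
/- If a deterministic filter F is neighborhood comparable (NC), then its compatibility graph G_F is chordal; indeed G_F is a disjoint union of complete graphs. -/
/-!
Under NC the relation "equal or adjacent" is transitive: if `b` is adjacent to `a` and `c`,
then `b ∈ N[a] ∩ N[c]`, so one of `N[a]`, `N[c]` contains the other and hence contains `a`
resp. `c`. Thus `G_F` is a disjoint union of cliques, and in a cycle `v, w, x, …` of length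
at least four the edge `s(v, x)` is a chord.
-/

namespace SimpleGraph

variable {V : Type} {G : SimpleGraph V}

theorem transitive_eq_or_adj_of_closedNbhd_comparable
    (h : ∀ v w, (G.closedNbhd v ∩ G.closedNbhd w).Nonempty →
      G.closedNbhd v ⊆ G.closedNbhd w ∨ G.closedNbhd w ⊆ G.closedNbhd v) :
    Transitive fun v w : V => v = w ∨ G.Adj v w := by
  intro a b c hab hbc
  have hb : b ∈ G.closedNbhd a ∩ G.closedNbhd c := ⟨hab.imp Eq.symm id, hbc.imp id Adj.symm⟩
  rcases h a c ⟨b, hb⟩ with hac | hca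
  · exact (hac (Or.inl rfl)).imp id Adj.symm
  · exact (hca (Or.inl rfl)).imp Eq.symm id

theorem chordal_of_transitive_eq_or_adj (h : Transitive fun v w : V => v = w ∨ G.Adj v w) :
    G.Chordal := by
  rintro v (_ | @⟨_, w, _, hvw, _ | @⟨_, x, _, hwx, q⟩⟩) hc hlen
  · simp at hlen
  · simp at hlen
  obtain ⟨hq, -⟩ := (Walk.cons_isPath_iff _ _).mp ((Walk.cons_isCycle_iff _ _).mp hc).1
  have hq_len : 2 ≤ q.length := by simpa using hlen
  have hvx : v ≠ x := by
    rintro rfl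
    have := Walk.length_eq_zero_iff.mpr (Walk.isPath_iff_nil.mp hq)
    omega
  refine ⟨v, x, (h (Or.inr hvw) (Or.inr hwx)).resolve_left hvx, Walk.start_mem_support _,
    by simp, ?_⟩
  simp only [Walk.edges_cons, List.mem_cons, Sym2.eq_iff]
  rintro ((⟨-, rfl⟩ | ⟨rfl, -⟩) | (⟨rfl, -⟩ | ⟨rfl, -⟩) | hmem)
  · exact hwx.ne rfl
  · exact hvw.ne rfl
  · exact hvw.ne rfl
  · exact hvx rfl
  · have := hq.length_eq_one_of_mem_edges (Sym2.eq_swap ▸ hmem)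
    omega

end SimpleGraph

/-- The compatibility graph of a neighborhood comparable filter is chordal; indeed it is a
disjoint union of complete graphs (the relation "equal or adjacent" is transitive). -/
theorem compatGraph_chordal_of_nc {S Y C : Type} (F : DFilter S Y C) (hnc : F.NC) :
    F.compatGraph.Chordal ∧
      Transitive fun v w : S => v = w ∨ F.compatGraph.Adj v w := by
  have htrans := SimpleGraph.transitive_eq_or_adj_of_closedNbhd_comparable hnc
  exact ⟨SimpleGraph.chordal_of_transitive_eq_or_adj htrans, htrans⟩
end
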